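/- arXiv:2001.03478 — 4 statements merged into one kernel-verified Lean document; each statement's English description precedes it below -/
import Mathlib

section
/- Let ε₀ < 0, Q > 0, ℓ ≠ 0, and define Δ_θ = (1 - (Q + ℓ²)/ε₀)/2 and z₊ = Δ_θ - √(Δ_θ² + Q/ε₀). Then Δ_θ² + Q/ε₀ ≥ 0 implies 0 < z₊ < 1, so the pendular motion with negative ε₀ is bounded strictly away from the poles. -/
/-! z₊ is the smaller root of the monic quadratic z² - 2Δ_θ z - Q/ε₀ (that is, Θ/(-ε₀)).
Its constant term -Q/ε₀ and its half-sum Δ_θ are positive, so z₊ > 0; its value at 1 is ℓ²/ε₀ < 0,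
so 1 lies strictly between the roots and z₊ < 1. -/

namespace Real

theorem sub_sqrt_sq_add_pos {d c : ℝ} (hc : c < 0) (hd : 0 < d) : 0 < d - √(d ^ 2 + c) := by
  have : √(d ^ 2 + c) < d := (sqrt_lt' hd).2 (by linarith)
  linarith

theorem sub_sqrt_sq_add_lt {d c x : ℝ} (hx : x ^ 2 - 2 * d * x - c < 0) :
    d - √(d ^ 2 + c) < x := by
  have hsq : (d - x) ^ 2 < d ^ 2 + c := by linarith
  have : |d - x| < √(d ^ 2 + c) := by
    simpa only [sqrt_sq_eq_abs] using sqrt_lt_sqrt (sq_nonneg _) hsq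
  linarith [le_abs_self (d - x)]

end Real

theorem pendular_root_negative_eps_general
    (ε₀ Q ℓ : ℝ) (hε : ε₀ < 0) (hQ : Q > 0) (hℓ : ℓ ≠ 0)
    (Δθ : ℝ) (hΔθ : Δθ = (1 - (Q + ℓ ^ 2) / ε₀) / 2)
    (zp : ℝ) (hzp : zp = Δθ - Real.sqrt (Δθ ^ 2 + Q / ε₀)) :
    0 < zp ∧ zp < 1 := by
  have hQε : Q / ε₀ < 0 := div_neg_of_pos_of_neg hQ hε
  have hℓε : ℓ ^ 2 / ε₀ < 0 := div_neg_of_pos_of_neg (by positivity) hε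
  have hsum : 2 * Δθ = 1 - Q / ε₀ - ℓ ^ 2 / ε₀ := by rw [hΔθ, add_div]; ring
  subst hzp
  exact ⟨Real.sub_sqrt_sq_add_pos hQε (by linarith), Real.sub_sqrt_sq_add_lt (by linarith)⟩

/-- For pendular Kerr polar motion with ε₀ < 0 and Q > 0, if the discriminant
Δ_θ² + Q/ε₀ is nonnegative then z₊ = Δ_θ - √(Δ_θ² + Q/ε₀) satisfies 0 < z₊ < 1. -/
theorem pendular_root_negative_eps
    (ε₀ Q ℓ : ℝ) (hε : ε₀ < 0) (hQ : Q > 0) (hℓ : ℓ ≠ 0)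
    (Δθ : ℝ) (hΔθ : Δθ = (1 - (Q + ℓ ^ 2) / ε₀) / 2)
    (zp : ℝ) (hzp : zp = Δθ - Real.sqrt (Δθ ^ 2 + Q / ε₀))
    (hdisc : Δθ ^ 2 + Q / ε₀ ≥ 0) :
    0 < zp ∧ zp < 1 :=
  pendular_root_negative_eps_general ε₀ Q ℓ hε hQ hℓ Δθ hΔθ zp hzp
end

section
/- Let Q ≥ 0, μ ≥ 0, M > 0 with Q + M²μ² > 0, E ∈ ℝ, ℓ ∈ ℝ, ℓ* = (2/√3)√(M²μ² + Q), C = (3/4)(ℓ*² - ℓ²), and v_R(R) = E² + 2EℓR - C R². If v_R(R) ≥ 0 for all R ≥ 0 (i.e., the radial range is unbounded above with the geodesic reaching R → ∞), and the orbit is future-oriented (E + ℓR > 0 for all R > 0 in the orbit), then ℓ ≥ ℓ*. -/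
/-!
Future orientation for arbitrarily large `R` forces `ℓ ≥ 0`, and `v_R ≥ 0` for arbitrarily large
`R` forces the leading coefficient `-C` of `v_R` to be nonnegative, i.e. `ℓ*² ≤ ℓ²`. With `ℓ ≥ 0`
this gives `ℓ* ≤ |ℓ*| ≤ ℓ`.
-/

section OrderedField

variable {K : Type*} [Field K] [LinearOrder K] [IsStrictOrderedRing K]

theorem nonneg_of_forall_pos_add_mul_pos {a b : K} (h : ∀ R : K, R > 0 → a + b * R > 0) :
    0 ≤ b := by
  by_contra! hb
  have hR : (|a| + 1) / -b > 0 := div_pos (by positivity) (neg_pos.mpr hb)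
  have hbR : b * ((|a| + 1) / -b) = -(|a| + 1) := by field_simp [hb.ne]
  linarith [h _ hR, le_abs_self a]

theorem nonpos_of_forall_nonneg_add_mul_sub_mul_sq {a b c : K}
    (h : ∀ R : K, R ≥ 0 → a + b * R - c * R ^ 2 ≥ 0) : c ≤ 0 := by
  by_contra! hc
  -- At `R = (|a| + |b|) / c + 1 ≥ 1` we get `c R² > (|a| + |b|) R ≥ a + b R`.
  set R := (|a| + |b|) / c + 1 with hRdef
  have hR : 1 ≤ R := le_add_of_nonneg_left (by positivity)
  have hcR : c * R = |a| + |b| + c := by rw [hRdef]; field_simp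
  have hbR : b * R ≤ |b| * R := mul_le_mul_of_nonneg_right (le_abs_self b) (by linarith)
  have hsq : c * R ^ 2 = (|a| + |b| + c) * R := by rw [← hcR]; ring
  nlinarith [h R (by linarith), le_abs_self a, abs_nonneg a]

end OrderedField

theorem unbounded_nhek_geodesics_supercritical_general
    (E ℓ : ℝ)
    (lstar : ℝ)
    (C : ℝ) (hC : C = (3 / 4) * (lstar ^ 2 - ℓ ^ 2))
    (hvR : ∀ R : ℝ, R ≥ 0 → E ^ 2 + 2 * E * ℓ * R - C * R ^ 2 ≥ 0)
    (hfuture : ∀ R : ℝ, R > 0 → E + ℓ * R > 0) :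
    ℓ ≥ lstar := by
  have hℓ : 0 ≤ ℓ := nonneg_of_forall_pos_add_mul_pos hfuture
  have hC0 : C ≤ 0 := nonpos_of_forall_nonneg_add_mul_sub_mul_sq hvR
  have hsq : lstar ^ 2 ≤ ℓ ^ 2 := by linarith
  exact (le_abs_self lstar).trans (abs_le_of_sq_le_sq hsq hℓ)

/-- Proposition 4: a radially unbounded future-oriented NHEK geodesic
(v_R ≥ 0 on all R ≥ 0 and E + ℓR > 0 for R > 0) must be prograde and
critical or supercritical: ℓ ≥ ℓ*. -/
theorem unbounded_nhek_geodesics_supercritical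
    (Q M μ E ℓ : ℝ) (hQ : Q ≥ 0) (hμ : μ ≥ 0) (hM : M > 0)
    (hQM : Q + M ^ 2 * μ ^ 2 > 0)
    (lstar : ℝ) (hlstar : lstar = (2 / Real.sqrt 3) * Real.sqrt (M ^ 2 * μ ^ 2 + Q))
    (C : ℝ) (hC : C = (3 / 4) * (lstar ^ 2 - ℓ ^ 2))
    (hvR : ∀ R : ℝ, R ≥ 0 → E ^ 2 + 2 * E * ℓ * R - C * R ^ 2 ≥ 0)
    (hfuture : ∀ R : ℝ, R > 0 → E + ℓ * R > 0) :
    ℓ ≥ lstar :=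
  unbounded_nhek_geodesics_supercritical_general E ℓ lstar C hC hvR hfuture
end

section
/- Let M > 0, μ > 0, Q ≥ 0, and define z₊(ℓ, Q) as the positive root of v_θ(z) = -ℓ²z + (Q + ((ℓ² - 4M²μ²)/4) z)(1 - z). Then lim_{ℓ→0} z₊(ℓ, Q) = Q/(M²μ²) if Q < M²μ², and equals 1 if Q ≥ M²μ². -/
/-!
At ℓ = 0 the denominator of the closed form of z₊ is 8M²μ² ≠ 0, so z₊ is continuous there and its
limit is its value. With m = M²μ² that value is (4(Q + m) - 4|m - Q|) / (8m) = min Q m / m.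
-/

open Filter Topology

/-- The closed form of z₊(ℓ, Q) in terms of `m = M²μ²`. -/
noncomputable def zPlus (m Q ℓ : ℝ) : ℝ :=
  (3 * ℓ ^ 2 + 4 * (Q + m) -
      Real.sqrt (9 * ℓ ^ 4 + 16 * (m - Q) ^ 2 + 8 * ℓ ^ 2 * (3 * m + 5 * Q))) /
    (2 * (4 * m - ℓ ^ 2))

theorem zPlus_zero (m Q : ℝ) : zPlus m Q 0 = min Q m / m := by
  have hmin : min Q m = (Q + m - |m - Q|) / 2 := by
    rcases le_total Q m with h | h
    · rw [min_eq_left h, abs_of_nonneg (sub_nonneg.2 h)]; ring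
    · rw [min_eq_right h, abs_of_nonpos (sub_nonpos.2 h)]; ring
  have hsqrt : Real.sqrt (16 * (m - Q) ^ 2) = 4 * |m - Q| := by
    rw [show (16 : ℝ) * (m - Q) ^ 2 = (4 * (m - Q)) ^ 2 by ring, Real.sqrt_sq_eq_abs, abs_mul,
      abs_of_pos four_pos]
  rw [zPlus, hmin]
  have hℓ : (0 : ℝ) ^ 2 = 0 ∧ (0 : ℝ) ^ 4 = 0 := by norm_num
  simp only [hℓ, mul_zero, zero_mul, zero_add, add_zero, sub_zero, hsqrt]
  ring

theorem continuousAt_zPlus_zero {m : ℝ} (hm : m ≠ 0) (Q : ℝ) : ContinuousAt (zPlus m Q) 0 := by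
  unfold zPlus
  refine ContinuousAt.div (by fun_prop) (by fun_prop) ?_
  simpa using hm

theorem tendsto_zPlus_zero {m : ℝ} (hm : m ≠ 0) (Q : ℝ) :
    Tendsto (zPlus m Q) (𝓝 0) (𝓝 (min Q m / m)) :=
  zPlus_zero m Q ▸ (continuousAt_zPlus_zero hm Q).tendsto

theorem zplus_small_angular_momentum_limit_general
    (M μ Q : ℝ) (hM : M > 0) (hμ : μ > 0)
    (zp : ℝ → ℝ)
    (hzp : ∀ ℓ : ℝ, zp ℓ = (3 * ℓ ^ 2 + 4 * (Q + M ^ 2 * μ ^ 2) -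
        Real.sqrt (9 * ℓ ^ 4 + 16 * (M ^ 2 * μ ^ 2 - Q) ^ 2 +
          8 * ℓ ^ 2 * (3 * M ^ 2 * μ ^ 2 + 5 * Q))) /
        (2 * (4 * M ^ 2 * μ ^ 2 - ℓ ^ 2))) :
    (Q < M ^ 2 * μ ^ 2 → Tendsto zp (nhds 0) (nhds (Q / (M ^ 2 * μ ^ 2)))) ∧
    (Q ≥ M ^ 2 * μ ^ 2 → Tendsto zp (nhds 0) (nhds 1)) := by
  have hm : M ^ 2 * μ ^ 2 ≠ 0 := by positivity
  have hzp_eq : zp = zPlus (M ^ 2 * μ ^ 2) Q := funext fun ℓ => by rw [hzp ℓ, zPlus]; ring_nf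
  have hlim := hzp_eq ▸ tendsto_zPlus_zero hm Q
  refine ⟨fun h => ?_, fun h => ?_⟩
  · rwa [min_eq_left h.le] at hlim
  · rwa [min_eq_right h, div_self hm] at hlim

/-- Small-ℓ limit of the maximal polar value z₊(ℓ, Q) of NHEK pendular motion:
z₊ → Q/(M²μ²) if Q < M²μ², and z₊ → 1 if Q ≥ M²μ². -/
theorem zplus_small_angular_momentum_limit
    (M μ Q : ℝ) (hM : M > 0) (hμ : μ > 0) (hQ : Q ≥ 0)
    (zp : ℝ → ℝ)
    (hzp : ∀ ℓ : ℝ, zp ℓ = (3 * ℓ ^ 2 + 4 * (Q + M ^ 2 * μ ^ 2) -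
        Real.sqrt (9 * ℓ ^ 4 + 16 * (M ^ 2 * μ ^ 2 - Q) ^ 2 +
          8 * ℓ ^ 2 * (3 * M ^ 2 * μ ^ 2 + 5 * Q))) /
        (2 * (4 * M ^ 2 * μ ^ 2 - ℓ ^ 2))) :
    (Q < M ^ 2 * μ ^ 2 → Tendsto zp (nhds 0) (nhds (Q / (M ^ 2 * μ ^ 2)))) ∧
    (Q ≥ M ^ 2 * μ ^ 2 → Tendsto zp (nhds 0) (nhds 1)) :=
  zplus_small_angular_momentum_limit_general M μ Q hM hμ zp hzp
end

section
/- Let ℓ > ℓ* > 0, C = (3/4)(ℓ*² - ℓ²) < 0, κ > 0, and define the near-NHEK radial potential v_{R;κ}(R) = (e + ℓκ)² + 2eℓ(R - κ) + (3/4)(ℓ² - ℓ*²)(R - κ)(R + κ). Then v_{R;κ} has a double root (in R) if and only if e = ±κ√(-C), and for e = -κ√(-C) the double root is R₀ = κℓ/√(-C), which satisfies R₀ > κ. -/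
/-!
Expanded in `R`, the potential is the quadratic `-C R² + 2eℓ R + (e² + ℓ²κ² + Cκ²)`, whose
discriminant factors as `4 (C + ℓ²) (e² + κ²C)`. Since `C + ℓ² > 0`, the potential is a perfect
square `-C (R - R₀)²` exactly when `e² + κ²C = 0`, i.e. `e = ±κ√(-C)`, and then
`R₀ = eℓ/C`. For `e = -κ√(-C)` this is `κℓ/√(-C)`, which exceeds `κ` because `-C < ℓ²`.
-/

theorem discrim_eq_zero_of_forall_eq_mul_sub_sq {R : Type*} [CommRing R] {a b c r : R}
    (h : ∀ x, a * x ^ 2 + b * x + c = a * (x - r) ^ 2) : discrim a b c = 0 := by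
  have hc : c = a * r ^ 2 := by linear_combination h 0
  have hb : b = -2 * a * r := by linear_combination h 1 - h 0
  rw [discrim, hb, hc]
  ring

section Field

variable {K : Type*} [Field K] [NeZero (2 : K)] {a b c : K}

theorem eq_mul_sub_sq_of_discrim_eq_zero (ha : a ≠ 0) (h : discrim a b c = 0) (x : K) :
    a * x ^ 2 + b * x + c = a * (x - -b / (2 * a)) ^ 2 := by
  rw [discrim, sub_eq_zero] at h
  rw [neg_div, sub_neg_eq_add, ← sub_eq_zero]
  field_simp
  linear_combination -h

theorem exists_forall_eq_mul_sub_sq_iff_discrim_eq_zero (ha : a ≠ 0) :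
    (∃ r, ∀ x, a * x ^ 2 + b * x + c = a * (x - r) ^ 2) ↔ discrim a b c = 0 :=
  ⟨fun ⟨_, hr⟩ => discrim_eq_zero_of_forall_eq_mul_sub_sq hr,
    fun h => ⟨_, eq_mul_sub_sq_of_discrim_eq_zero ha h⟩⟩

end Field

theorem discrim_nearNhek_potential {K : Type*} [CommRing K] (C ℓ κ e : K) :
    discrim (-C) (2 * e * ℓ) (e ^ 2 + ℓ ^ 2 * κ ^ 2 + C * κ ^ 2) =
      4 * (C + ℓ ^ 2) * (e ^ 2 + κ ^ 2 * C) := by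
  rw [discrim]
  ring

/-- Near-NHEK spherical orbits: the radial potential
v_{R;κ}(R) = (e + ℓκ)² + 2eℓ(R - κ) + (3/4)(ℓ² - ℓ*²)(R - κ)(R + κ)
has a double root iff e = ±κ√(-C), and for e = -κ√(-C) the double root is
R₀ = κℓ/√(-C) > κ. -/
theorem near_nhek_spherical_orbit
    (ℓ lstar κ e : ℝ) (hlstar : lstar > 0) (hℓ : ℓ > lstar) (hκ : κ > 0)
    (C : ℝ) (hC : C = (3 / 4) * (lstar ^ 2 - ℓ ^ 2))
    (v : ℝ → ℝ)
    (hv : ∀ R : ℝ, v R = (e + ℓ * κ) ^ 2 + 2 * e * ℓ * (R - κ) +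
        (3 / 4) * (ℓ ^ 2 - lstar ^ 2) * (R - κ) * (R + κ)) :
    ((∃ R₀ : ℝ, ∀ R : ℝ, v R = -C * (R - R₀) ^ 2) ↔
      (e = κ * Real.sqrt (-C) ∨ e = -(κ * Real.sqrt (-C)))) ∧
    (e = -(κ * Real.sqrt (-C)) →
      (∀ R : ℝ, v R = -C * (R - κ * ℓ / Real.sqrt (-C)) ^ 2) ∧
      κ * ℓ / Real.sqrt (-C) > κ) := by
  have hℓpos : 0 < ℓ := hlstar.trans hℓ
  have hCneg : C < 0 := by rw [hC]; nlinarith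
  have hCℓ : 0 < C + ℓ ^ 2 := by rw [hC]; nlinarith
  set s := Real.sqrt (-C)
  have hs : 0 < s := Real.sqrt_pos.2 (neg_pos.2 hCneg)
  have hs2 : s ^ 2 = -C := Real.sq_sqrt (neg_nonneg.2 hCneg.le)
  have hquad : ∀ R, v R = -C * R ^ 2 + 2 * e * ℓ * R + (e ^ 2 + ℓ ^ 2 * κ ^ 2 + C * κ ^ 2) :=
    fun R => by rw [hv, hC]; ring
  have hdisc : discrim (-C) (2 * e * ℓ) (e ^ 2 + ℓ ^ 2 * κ ^ 2 + C * κ ^ 2) = 0 ↔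
      e = κ * s ∨ e = -(κ * s) := by
    rw [discrim_nearNhek_potential, mul_eq_zero, or_iff_right (by positivity),
      ← sq_eq_sq_iff_eq_or_eq_neg, mul_pow, hs2]
    exact ⟨fun h => by linear_combination h, fun h => by linear_combination h⟩
  simp_rw [hquad]
  refine ⟨(exists_forall_eq_mul_sub_sq_iff_discrim_eq_zero (neg_ne_zero.2 hCneg.ne)).trans hdisc,
    fun he => ⟨fun R => ?_, ?_⟩⟩
  · have hR₀ : -(2 * e * ℓ) / (2 * -C) = κ * ℓ / s := by
      rw [he, ← hs2]; field_simp
    rw [eq_mul_sub_sq_of_discrim_eq_zero (neg_ne_zero.2 hCneg.ne) (hdisc.2 (Or.inr he)), hR₀]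
  · have hsℓ : s < ℓ := lt_of_pow_lt_pow_left₀ 2 hℓpos.le (by linarith)
    rw [gt_iff_lt, lt_div_iff₀ hs]
    exact mul_lt_mul_of_pos_left hsℓ hκ
end
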